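/- Let $\varkappa$ be an infinite cardinal and let $G$ be a free group of rank $\varkappa$ (equivalently, the free group on a set of generators of cardinality $\varkappa$). Then $G$ can be partitioned into countably many cells $G=\bigcup_{n\in\omega}A_n$ such that $cov(A_nA_n^{-1})=\varkappa$ for each $n\in\omega$. -/

import Mathlib

open Cardinal Pointwise

/-- The covering number of a subset `A` of a group `G`:
the least cardinality of a set `X ⊆ G` with `X * A = G`. -/
noncomputable def cov {G : Type*} [Group G] (A : Set G) : Cardinal :=
  sInf {c : Cardinal | ∃ X : Set G, #X = c ∧ X * A = Set.univ}

/-!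
Split the generators into countably many blocks `S n`, each of size `κ`, and let `π n` be the
retraction of `F(S)` onto `F(S n)` that kills the other generators. A word involves only finitely
many blocks, so the kernels of the `π n` cover `F(S)`; disjointifying them gives the cells `A n`,
and `A n` is nonempty because it contains `s₀ s₁ ⋯ sₙ₋₁` with `sₖ ∈ S k`. As
`A n * (A n)⁻¹ ⊆ ker (π n)`, any `X` with `X * A n * (A n)⁻¹ = F(S)` maps onto `F(S n)`, so
`κ = #(S n) ≤ #X`; the bound `cov ≤ #F(S) = κ` is trivial.
-/

section Cov

variable {G : Type u} [Group G] {A : Set G}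

lemma cov_le_mk (hA : A.Nonempty) : cov A ≤ #G :=
  csInf_le' ⟨Set.univ, mk_univ, Set.univ_mul hA⟩

lemma exists_mk_eq_cov (hA : A.Nonempty) : ∃ X : Set G, #X = cov A ∧ X * A = Set.univ :=
  csInf_mem (s := {c | ∃ X : Set G, #X = c ∧ X * A = Set.univ})
    ⟨_, Set.univ, rfl, Set.univ_mul hA⟩

lemma lift_mk_range_le_cov {H : Type v} [Group H] (φ : G →* H) (hA : A.Nonempty)
    (hker : A ⊆ φ.ker) : lift.{u} #(Set.range φ) ≤ lift.{v} (cov A) := by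
  obtain ⟨X, hX, hXA⟩ := exists_mk_eq_cov hA
  rw [← hX]
  have himage : φ '' X = Set.range φ := by
    refine (Set.image_subset_range _ _).antisymm ?_
    rintro _ ⟨g, rfl⟩
    obtain ⟨x, hx, a, ha, rfl⟩ := Set.mem_mul.mp (hXA.symm ▸ Set.mem_univ g)
    exact ⟨x, hx, by rw [map_mul, hker ha, mul_one]⟩
  exact himage ▸ mk_image_le_lift

lemma mul_inv_subset_of_subset_subgroup {K : Subgroup G} (hA : A ⊆ K) : A * A⁻¹ ⊆ K := by
  rintro _ ⟨a, ha, b, hb, rfl⟩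
  exact K.mul_mem (hA ha) (K.inv_mem_iff.mp (hA hb))

end Cov

namespace FreeGroup

variable {S : Type u} {ι : Type*} [DecidableEq ι] (b : S → ι)

noncomputable def blockProj (i : ι) : FreeGroup S →* FreeGroup S :=
  FreeGroup.lift fun s => if b s = i then of s else 1

lemma blockProj_of (i : ι) (s : S) : blockProj b i (of s) = if b s = i then of s else 1 :=
  lift_apply_of

lemma eventually_blockProj_eq_one (g : FreeGroup S) :
    ∀ᶠ i in Filter.cofinite, blockProj b i g = 1 := by
  induction g using FreeGroup.induction_on with
  | C1 => simp
  | of s =>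
    filter_upwards [Filter.eventually_cofinite_ne (b s)] with i hi
    rw [blockProj_of, if_neg (Ne.symm hi)]
  | inv_of s h => simpa using h
  | mul g h hg hh => filter_upwards [hg, hh] with i hgi hhi; simp [hgi, hhi]

lemma mk_fiber_le_mk_range_blockProj (i : ι) : #{s // b s = i} ≤ #(Set.range (blockProj b i)) :=
  mk_le_of_injective (f := fun s => ⟨of s.1, of s.1, by rw [blockProj_of, if_pos s.2]⟩)
    fun s t hst => Subtype.ext (of_injective (congrArg Subtype.val hst))

lemma iUnion_blockProj_ker [Infinite ι] :
    ⋃ i, ((blockProj b i).ker : Set (FreeGroup S)) = Set.univ :=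
  Set.eq_univ_of_forall fun g => Set.mem_iUnion.mpr (eventually_blockProj_eq_one b g).exists

noncomputable def prefixWord (σ : ℕ → S) : ℕ → FreeGroup S
  | 0 => 1
  | n + 1 => prefixWord σ n * of (σ n)

lemma blockProj_prefixWord {b : S → ℕ} {σ : ℕ → S} (hσ : ∀ m, b (σ m) = m) (n k : ℕ) :
    blockProj b k (prefixWord σ n) = if k < n then of (σ k) else 1 := by
  induction n with
  | zero => simp [prefixWord]
  | succ n ih =>
    rw [prefixWord, _root_.map_mul, ih, blockProj_of, hσ n]
    by_cases hkn : k = n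
    · simp [hkn]
    · have : k < n + 1 ↔ k < n := by omega
      simp [Ne.symm hkn, this]

lemma nonempty_disjointed_blockProj_ker {b : S → ℕ} (hb : Function.Surjective b) (n : ℕ) :
    (disjointed (fun i => ((blockProj b i).ker : Set (FreeGroup S))) n).Nonempty := by
  refine ⟨prefixWord (Function.surjInv hb) n, ?_⟩
  simp [disjointed_eq_inter_compl, blockProj_prefixWord (Function.surjInv_eq hb)]

end FreeGroup

lemma exists_fiber_mk_eq (S : Type u) [Infinite S] : ∃ b : S → ℕ, ∀ n, #{s // b s = n} = #S := by
  have : #(ℕ × S) = #S := by simp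
  obtain ⟨e⟩ := Cardinal.eq.mp this
  refine ⟨fun s => (e.symm s).1, fun n => ?_⟩
  have fiber : {s // (e.symm s).1 = n} ≃ {m // m = n} × S :=
    (e.symm.subtypeEquiv (p := fun s => (e.symm s).1 = n) fun _ => Iff.rfl).trans
      Equiv.prodSubtypeFstEquivSubtypeProd
  simp [mk_congr fiber]

open FreeGroup in
/-- The free group of infinite rank `κ` admits a partition into countably many cells
`A n` with `cov (A n * (A n)⁻¹) = κ` for every `n`. -/
theorem partition_cov_eq_card_free_group {S : Type u} (kap : Cardinal.{u})
    (hkap : ℵ₀ ≤ kap) (hS : #S = kap) :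
    ∃ A : ℕ → Set (FreeGroup S),
      (⋃ n, A n) = Set.univ ∧
      (∀ m n, m ≠ n → Disjoint (A m) (A n)) ∧
      ∀ n, cov (A n * (A n)⁻¹) = kap := by
  have : Infinite S := infinite_iff.mpr (hS ▸ hkap)
  obtain ⟨b, hb⟩ := exists_fiber_mk_eq S
  have hsurj : Function.Surjective b := fun n =>
    (mk_ne_zero_iff.mp ((hb n).trans_ne (mk_ne_zero S))).elim fun s => ⟨s.1, s.2⟩
  set K : ℕ → Set (FreeGroup S) := fun n => (blockProj b n).ker
  refine ⟨disjointed K, iUnion_disjointed.trans (iUnion_blockProj_ker b),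
    fun m n h => disjoint_disjointed K h, fun n => ?_⟩
  have hne := nonempty_disjointed_blockProj_ker hsurj n
  have hAA : (disjointed K n * (disjointed K n)⁻¹).Nonempty := hne.mul hne.inv
  refine le_antisymm ((cov_le_mk hAA).trans_eq ?_) ?_
  · rw [mk_freeGroup, hS, max_eq_left hkap]
  · have hrange := lift_mk_range_le_cov (blockProj b n) hAA
      (mul_inv_subset_of_subset_subgroup (disjointed_subset K n))
    rw [lift_le] at hrange
    exact hS ▸ (hb n).symm.le.trans ((mk_fiber_le_mk_range_blockProj b n).trans hrange)
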